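/- arXiv:1812.06894 — 5 statements merged into one kernel-verified Lean document; each statement's English description precedes it below -/
import Mathlib

section
/- Under the asymptotic regime in which n → ∞ with n > p + m, p ≥ r ≥ 1, m·r → ∞ and max{p, m, r}/n → 0, there exist a constant C > 0 and an index N such that for all n ≥ N, |μₙ − [−n·m·r/(n+r−p) − n·m·r·(m+r)/(2(n+r−p)²) − n·m·r·(m²/3 + m·r/2 + r²/3)/(n+r−p)³]| ≤ C·[m·r·(m³ + r³)/n³ + m·r/n]. -/
/-!
With `q = n - p` and `s = q + r`, the terms `x log x` in `μₙ / n` telescope to `G q - G s - Λ / 2`,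
where `G x = x log x - (x - m) log (x - m)` and `Λ` is the logarithm in the first summand of `μₙ`.
Since `G' x = -log (1 - m / x)`, integrating the cubic Taylor polynomial of `-log (1 - u)` over
`[q, s]` and expanding `log (s / q) = -log (1 - r / s)` the same way reproduces the three main
terms, up to an explicit rational defect of order `m²r²(m + r) / q⁴`. The two Taylor remainders
are `O(mr(m³ + r³) / q⁴)`, `Λ = O(mr / q²)`, and `n ≤ 2q` once `max {p, m, r} / n` is small.
-/

open Filter

/-- `μₙ` of the paper. -/
noncomputable def muN (p m r : ℕ → ℕ) (n : ℕ) : ℝ :=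
  (n : ℝ) * ((n : ℝ) - m n - p n - 1 / 2) *
      Real.log ((((n : ℝ) + r n - p n - m n) * ((n : ℝ) - p n)) /
        ((((n : ℝ) - p n - m n)) * ((n : ℝ) + r n - p n)))
    + (n : ℝ) * r n * Real.log (((n : ℝ) + r n - p n - m n) / ((n : ℝ) + r n - p n))
    + (n : ℝ) * m n * Real.log (((n : ℝ) - p n) / ((n : ℝ) + r n - p n))

open Real

lemma abs_log_one_sub_add_le {u : ℝ} (hu : |u| ≤ 1 / 2) :
    |log (1 - u) + u + u ^ 2 / 2 + u ^ 3 / 3| ≤ 2 * u ^ 4 := by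
  have h := abs_log_sub_add_sum_range_le (hu.trans_lt (by norm_num)) 3
  simp only [Finset.sum_range_succ, Finset.sum_range_zero] at h
  norm_num at h
  have h4 : |u| ^ 4 / (1 - |u|) ≤ 2 * u ^ 4 := by
    rw [div_le_iff₀ (by linarith), ← (by decide : Even 4).pow_abs u]
    nlinarith [pow_nonneg (abs_nonneg u) 4]
  calc _ = |u + u ^ 2 / 2 + u ^ 3 / 3 + log (1 - u)| := by ring_nf
    _ ≤ 2 * u ^ 4 := h.trans h4

noncomputable def logSubRem (m x : ℝ) : ℝ :=
  log x - log (x - m) - (m / x + m ^ 2 / (2 * x ^ 2) + m ^ 3 / (3 * x ^ 3))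

noncomputable def logSubRemPrimitive (m x : ℝ) : ℝ :=
  x * log x - (x - m) * log (x - m) - m * log x + m ^ 2 / (2 * x) + m ^ 3 / (6 * x ^ 2)

lemma abs_logSubRem_le {m x : ℝ} (hm : 0 ≤ m) (hx : 0 < x) (hmx : 2 * m ≤ x) :
    |logSubRem m x| ≤ 2 * (m / x) ^ 4 := by
  have hu : |m / x| ≤ 1 / 2 := by
    rw [abs_of_nonneg (by positivity), div_le_iff₀ hx]; linarith
  have hlog : log (1 - m / x) = log (x - m) - log x := by
    rw [one_sub_div hx.ne', log_div (by linarith) hx.ne']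
  calc |logSubRem m x| = |log (1 - m / x) + m / x + (m / x) ^ 2 / 2 + (m / x) ^ 3 / 3| := by
        rw [hlog, ← abs_neg, logSubRem]; congr 1; field_simp; ring
    _ ≤ 2 * (m / x) ^ 4 := abs_log_one_sub_add_le hu

lemma hasDerivAt_logSubRemPrimitive {m x : ℝ} (hx : x ≠ 0) (hxm : x - m ≠ 0) :
    HasDerivAt (logSubRemPrimitive m) (logSubRem m x) x := by
  have h1 := hasDerivAt_mul_log hx
  have h2 := (hasDerivAt_mul_log hxm).comp x ((hasDerivAt_id x).sub_const m)
  have h3 := (hasDerivAt_log hx).const_mul m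
  have h4 := ((hasDerivAt_id x).const_mul 2).inv (mul_ne_zero two_ne_zero hx) |>.const_mul (m ^ 2)
  have h5 := ((hasDerivAt_pow 2 x).const_mul 6).inv (by positivity) |>.const_mul (m ^ 3)
  refine ((((h1.sub h2).sub h3).add h4).add h5 |>.congr_deriv ?_).congr_of_eventuallyEq
    (.of_forall fun y => ?_)
  · simp only [logSubRem, id]; field_simp; ring
  · simp only [logSubRemPrimitive, Pi.add_apply, Pi.sub_apply, Pi.inv_apply, Function.comp_apply,
      id]
    ring

lemma abs_logSubRemPrimitive_add_sub_le {m q r : ℝ} (hm : 0 ≤ m) (hq : 0 < q) (hmq : 2 * m ≤ q)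
    (hr : 0 ≤ r) :
    |logSubRemPrimitive m (q + r) - logSubRemPrimitive m q| ≤ 2 * (m / q) ^ 4 * r := by
  have hderiv : ∀ x ∈ Set.Icc q (q + r),
      HasDerivWithinAt (logSubRemPrimitive m) (logSubRem m x) (Set.Icc q (q + r)) x :=
    fun x hx => (hasDerivAt_logSubRemPrimitive (by linarith [hx.1]) (by linarith [hx.1]))
      |>.hasDerivWithinAt
  have hbound : ∀ x ∈ Set.Ico q (q + r), ‖logSubRem m x‖ ≤ 2 * (m / q) ^ 4 := fun x hx =>
    calc ‖logSubRem m x‖ ≤ 2 * (m / x) ^ 4 :=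
        abs_logSubRem_le hm (by linarith [hx.1]) (by linarith [hx.1])
      _ ≤ 2 * (m / q) ^ 4 := by have := hx.1; gcongr; exact div_nonneg hm (by linarith)
  simpa using norm_image_sub_le_of_norm_deriv_le_segment' hderiv hbound (q + r)
    ⟨by linarith, le_rfl⟩

lemma abs_log_ratio_le {q m r : ℝ} (hq : 0 < q) (hm : 0 ≤ m) (hr : 0 ≤ r) (hmq : 2 * m ≤ q) :
    |log ((q + r - m) * q / ((q - m) * (q + r)))| ≤ 2 * m * r / q ^ 2 := by
  have hqm : 0 < q - m := by linarith
  have hqr : 0 < q + r := by linarith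
  set ε := m * r / ((q - m) * (q + r))
  have hε : 0 ≤ ε := by positivity
  have harg : (q + r - m) * q / ((q - m) * (q + r)) = 1 + ε := by
    simp only [ε]; field_simp; ring
  have hε_le : ε ≤ 2 * m * r / q ^ 2 := by
    rw [div_le_div_iff₀ (by positivity) (by positivity)]
    have : q ^ 2 ≤ 2 * ((q - m) * (q + r)) := by nlinarith
    nlinarith [mul_le_mul_of_nonneg_left this (by positivity : 0 ≤ m * r)]
  rw [harg, abs_of_nonneg (log_nonneg (by linarith))]
  linarith [log_le_sub_one_of_pos (by positivity : 0 < 1 + ε)]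

noncomputable def muRescaled (q m r : ℝ) : ℝ :=
  (q - m - 1 / 2) * log ((q + r - m) * q / ((q - m) * (q + r)))
    + r * log ((q + r - m) / (q + r)) + m * log (q / (q + r))

noncomputable def muApprox (q m r : ℝ) : ℝ :=
  -(m * r / (q + r)) - m * r * (m + r) / (2 * (q + r) ^ 2)
    - m * r * (m ^ 2 / 3 + m * r / 2 + r ^ 2 / 3) / (q + r) ^ 3

lemma muRescaled_sub_muApprox {q m r : ℝ} (hqm : 0 < q - m) (hq : 0 < q) (hqr : 0 < q + r)
    (hqrm : 0 < q + r - m) :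
    muRescaled q m r - muApprox q m r =
      -(logSubRemPrimitive m (q + r) - logSubRemPrimitive m q)
        - log ((q + r - m) * q / ((q - m) * (q + r))) / 2 - m * logSubRem r (q + r)
        - (m ^ 2 * r ^ 3 / (2 * q * (q + r) ^ 3)
          + m ^ 3 * r ^ 2 * (3 * q + r) / (6 * q ^ 2 * (q + r) ^ 3)) := by
  simp only [muRescaled, muApprox, logSubRemPrimitive, logSubRem, add_sub_cancel_right]
  rw [log_div (by positivity) (by positivity), log_mul hqrm.ne' hq.ne', log_mul hqm.ne' hqr.ne',
    log_div hqrm.ne' hqr.ne', log_div hq.ne' hqr.ne']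
  field_simp
  ring

lemma taylorDefect_le {q m r : ℝ} (hq : 0 < q) (hm : 0 ≤ m) (hr : 0 ≤ r) :
    m ^ 2 * r ^ 3 / (2 * q * (q + r) ^ 3) + m ^ 3 * r ^ 2 * (3 * q + r) / (6 * q ^ 2 * (q + r) ^ 3)
      ≤ m * r * (m ^ 3 + r ^ 3) / q ^ 4 := by
  have hqr : q ≤ q + r := by linarith
  have h1 : m ^ 2 * r ^ 3 / (2 * q * (q + r) ^ 3) ≤ m ^ 2 * r ^ 3 / (2 * q ^ 4) := by
    rw [pow_succ' q 3, ← mul_assoc]; gcongr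
  have h2 : m ^ 3 * r ^ 2 * (3 * q + r) / (6 * q ^ 2 * (q + r) ^ 3)
      ≤ m ^ 3 * r ^ 2 / (2 * q ^ 4) := by
    calc m ^ 3 * r ^ 2 * (3 * q + r) / (6 * q ^ 2 * (q + r) ^ 3)
        ≤ m ^ 3 * r ^ 2 * (3 * (q + r)) / (6 * q ^ 2 * (q + r) ^ 3) := by gcongr; linarith
      _ = m ^ 3 * r ^ 2 / (2 * q ^ 2 * (q + r) ^ 2) := by field_simp; ring
      _ ≤ m ^ 3 * r ^ 2 / (2 * q ^ 4) := by
        rw [show q ^ 4 = q ^ 2 * q ^ 2 by ring, ← mul_assoc]; gcongr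
  have h3 : m ^ 2 * r ^ 3 + m ^ 3 * r ^ 2 ≤ 2 * (m * r * (m ^ 3 + r ^ 3)) := by
    nlinarith [mul_nonneg (mul_nonneg hm hr)
      (mul_nonneg (add_nonneg hm hr) (add_nonneg (mul_nonneg zero_le_two (sq_nonneg (m - r)))
        (mul_nonneg hm hr)))]
  calc _ ≤ m ^ 2 * r ^ 3 / (2 * q ^ 4) + m ^ 3 * r ^ 2 / (2 * q ^ 4) := add_le_add h1 h2
    _ = (m ^ 2 * r ^ 3 + m ^ 3 * r ^ 2) / 2 / q ^ 4 := by ring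
    _ ≤ m * r * (m ^ 3 + r ^ 3) / q ^ 4 := by gcongr; linarith

lemma abs_muRescaled_sub_muApprox_le {q m r : ℝ} (hq : 0 < q) (hm : 0 ≤ m) (hr : 0 ≤ r)
    (hmq : 2 * m ≤ q) (hrq : r ≤ q) :
    |muRescaled q m r - muApprox q m r|
      ≤ 3 * (m * r * (m ^ 3 + r ^ 3)) / q ^ 4 + m * r / q ^ 2 := by
  rw [muRescaled_sub_muApprox (by linarith) hq (by linarith) (by linarith)]
  have hP := abs_logSubRemPrimitive_add_sub_le hm hq hmq hr
  have hΛ := abs_log_ratio_le hq hm hr hmq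
  have hmE : |m * logSubRem r (q + r)| ≤ m * (2 * (r / q) ^ 4) := by
    rw [abs_mul, abs_of_nonneg hm]
    gcongr
    refine (abs_logSubRem_le hr (by linarith) (by linarith)).trans ?_
    gcongr; linarith
  have hD := taylorDefect_le hq hm hr
  have hD0 : 0 ≤ m ^ 2 * r ^ 3 / (2 * q * (q + r) ^ 3)
      + m ^ 3 * r ^ 2 * (3 * q + r) / (6 * q ^ 2 * (q + r) ^ 3) := by positivity
  calc _ ≤ 2 * (m / q) ^ 4 * r + 2 * m * r / q ^ 2 / 2 + m * (2 * (r / q) ^ 4)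
        + m * r * (m ^ 3 + r ^ 3) / q ^ 4 := by
        rw [abs_le] at hP hΛ hmE ⊢; constructor <;> linarith
    _ = 3 * (m * r * (m ^ 3 + r ^ 3)) / q ^ 4 + m * r / q ^ 2 := by ring

lemma mul_add_div_pow_le {n q X Y : ℝ} (hn : 0 < n) (hnq : n ≤ 2 * q) (hX : 0 ≤ X) (hY : 0 ≤ Y) :
    n * (3 * X / q ^ 4 + Y / q ^ 2) ≤ 48 * (X / n ^ 3 + Y / n) := by
  have hq : 0 < q := by linarith
  have hinv : q⁻¹ ≤ 2 * n⁻¹ := by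
    rw [← div_eq_mul_inv, le_div_iff₀ hn, ← div_eq_inv_mul, div_le_iff₀ hq]; linarith
  calc n * (3 * X / q ^ 4 + Y / q ^ 2) = 3 * X * n * q⁻¹ ^ 4 + Y * n * q⁻¹ ^ 2 := by ring
    _ ≤ 3 * X * n * (2 * n⁻¹) ^ 4 + Y * n * (2 * n⁻¹) ^ 2 := by gcongr
    _ = 48 * (X / n ^ 3) + 4 * (Y / n) := by field_simp; ring
    _ ≤ 48 * (X / n ^ 3 + Y / n) := by
      have : 0 ≤ Y / n := by positivity
      linarith

lemma muN_eq_mul_muRescaled (p m r : ℕ → ℕ) (n : ℕ) :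
    muN p m r n = n * muRescaled ((n : ℝ) - p n) (m n) (r n) := by
  simp only [muN, muRescaled]
  rw [show (n : ℝ) + r n - p n - m n = n - p n + r n - m n by ring,
    show (n : ℝ) + r n - p n = n - p n + r n by ring]
  ring

theorem muN_expansion_general
    (p m r : ℕ → ℕ)
    (hmax : Tendsto (fun (n : ℕ) => (max (p n) (max (m n) (r n)) : ℝ) / n) atTop (nhds 0)) :
    ∃ C > (0 : ℝ), ∃ N : ℕ, ∀ n ≥ N,
      |muN p m r n -
          (-(n : ℝ) * m n * r n / ((n : ℝ) + r n - p n)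
            - (n : ℝ) * m n * r n * ((m n : ℝ) + r n) / (2 * ((n : ℝ) + r n - p n) ^ 2)
            - (n : ℝ) * m n * r n *
                ((m n : ℝ) ^ 2 / 3 + (m n : ℝ) * r n / 2 + (r n : ℝ) ^ 2 / 3) /
                ((n : ℝ) + r n - p n) ^ 3)| ≤
        C * ((m n : ℝ) * r n * ((m n : ℝ) ^ 3 + (r n : ℝ) ^ 3) / (n : ℝ) ^ 3
              + (m n : ℝ) * r n / n) := by
  obtain ⟨N, hN⟩ := eventually_atTop.mp
    ((eventually_gt_atTop 0).and (hmax.eventually (gt_mem_nhds (by norm_num : (0 : ℝ) < 1 / 4))))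
  refine ⟨48, by norm_num, N, fun n hn => ?_⟩
  obtain ⟨hn_pos, hsmall⟩ := hN n hn
  have hn0 : (0 : ℝ) < n := by exact_mod_cast hn_pos
  rw [div_lt_iff₀ hn0] at hsmall
  have hp := (le_max_left _ _).trans_lt hsmall
  have hm := ((le_max_left _ _).trans (le_max_right _ _)).trans_lt hsmall
  have hr := ((le_max_right _ _).trans (le_max_right _ _)).trans_lt hsmall
  have happrox : -(n : ℝ) * m n * r n / ((n : ℝ) + r n - p n)
      - (n : ℝ) * m n * r n * ((m n : ℝ) + r n) / (2 * ((n : ℝ) + r n - p n) ^ 2)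
      - (n : ℝ) * m n * r n * ((m n : ℝ) ^ 2 / 3 + (m n : ℝ) * r n / 2 + (r n : ℝ) ^ 2 / 3) /
          ((n : ℝ) + r n - p n) ^ 3 = n * muApprox ((n : ℝ) - p n) (m n) (r n) := by
    simp only [muApprox, sub_add_eq_add_sub]; ring
  rw [happrox, muN_eq_mul_muRescaled, ← mul_sub, abs_mul, abs_of_pos hn0]
  calc _ ≤ (n : ℝ) * (3 * ((m n : ℝ) * r n * ((m n : ℝ) ^ 3 + (r n : ℝ) ^ 3))
          / ((n : ℝ) - p n) ^ 4 + (m n : ℝ) * r n / ((n : ℝ) - p n) ^ 2) := by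
        gcongr
        exact abs_muRescaled_sub_muApprox_le (by linarith) (by positivity) (by positivity)
          (by linarith) (by linarith)
    _ ≤ _ := mul_add_div_pow_le hn0 (by linarith) (by positivity) (by positivity)

/-- Lemma (expansion of `μₙ`): under `n > p + m`, `p ≥ r ≥ 1`, `m·r → ∞` and
`max{p,m,r}/n → 0`, one has
`μₙ = −nmr/(n+r−p) − nmr(m+r)/(2(n+r−p)²) − nmr(m²/3+mr/2+r²/3)/(n+r−p)³
 + O(mr(m³+r³)/n³) + O(mr/n)`. -/
theorem muN_expansion
    (p m r : ℕ → ℕ)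
    (h : ∀ᶠ n in atTop, 1 ≤ r n ∧ r n ≤ p n ∧ p n + m n < n)
    (hmr : Tendsto (fun n => (m n : ℝ) * r n) atTop atTop)
    (hmax : Tendsto (fun (n : ℕ) => (max (p n) (max (m n) (r n)) : ℝ) / n) atTop (nhds 0)) :
    ∃ C > (0 : ℝ), ∃ N : ℕ, ∀ n ≥ N,
      |muN p m r n -
          (-(n : ℝ) * m n * r n / ((n : ℝ) + r n - p n)
            - (n : ℝ) * m n * r n * ((m n : ℝ) + r n) / (2 * ((n : ℝ) + r n - p n) ^ 2)
            - (n : ℝ) * m n * r n *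
                ((m n : ℝ) ^ 2 / 3 + (m n : ℝ) * r n / 2 + (r n : ℝ) ^ 2 / 3) /
                ((n : ℝ) + r n - p n) ^ 3)| ≤
        C * ((m n : ℝ) * r n * ((m n : ℝ) ^ 3 + (r n : ℝ) ^ 3) / (n : ℝ) ^ 3
              + (m n : ℝ) * r n / n) :=
  muN_expansion_general p m r hmax
end

section
/- Under the asymptotic regime in which n → ∞ with n > p + m, p ≥ r ≥ 1, m·r → ∞ and max{p, m, r}/n → 0, one has (μₙ + m·r)/√(2·m·r) → 0 as n → ∞ if and only if lim_{n→∞} √(m·r)·(p + m/2 − r/2)/n = 0. -/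
/-!
Write `φ x = (x - 1/2) log x`, `a = n - p - m` and `b = n + r - p`. Collecting logarithms,
`μₙ = -n (φ a + φ b - φ (a + m) - φ (b - m))`, and the bracket is nonnegative for convex `φ`
since `a + m` and `b - m` lie between `a` and `b` with the same sum. Subtracting from `φ` a
polynomial whose second derivative stays below `φ'' x = 1/x + 1/(2x²)` on `[a, b]`, or subtracting
`φ` from one whose second derivative stays above, keeps convexity, so the bracket is squeezed
between explicit polynomial values. Once `2 (p + m) ≤ n` this gives `S ≤ -(μₙ + mr) ≤ 8 S` with
`S = mr (p + m/2 - r/2) / n`, and dividing by `√(2mr)` makes the two sequences of the theorem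
comparable up to constant factors.
-/

open Filter

open Real Set Asymptotics

noncomputable def stirlingTerm (x : ℝ) : ℝ := (x - 1 / 2) * log x

def crossDiff (f : ℝ → ℝ) (a b c : ℝ) : ℝ := f a + f b - f (a + c) - f (b - c)

theorem ConvexOn.crossDiff_nonneg {s : Set ℝ} {f : ℝ → ℝ} (hf : ConvexOn ℝ s f) {a b c : ℝ}
    (ha : a ∈ s) (hb : b ∈ s) (hc : 0 ≤ c) (hcb : a + c ≤ b) : 0 ≤ crossDiff f a b c := by
  rcases (show a ≤ b by linarith).eq_or_lt with rfl | hab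
  · obtain rfl : c = 0 := by linarith
    simp [crossDiff]
  set θ := c / (b - a)
  have hθ : 0 ≤ θ := div_nonneg hc (by linarith)
  have hθ' : 0 ≤ 1 - θ := by
    rw [sub_nonneg, div_le_one (by linarith)]
    linarith
  have hcθ : c = θ * (b - a) := (div_mul_cancel₀ c (by linarith)).symm
  have hleft := hf.2 ha hb hθ' hθ (by ring)
  have hright := hf.2 ha hb hθ hθ' (by ring)
  simp only [smul_eq_mul] at hleft hright
  rw [show (1 - θ) * a + θ * b = a + c by rw [hcθ]; ring] at hleft
  rw [show θ * a + (1 - θ) * b = b - c by rw [hcθ]; ring] at hright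
  unfold crossDiff
  linarith

theorem ConvexOn.crossDiff_le {s : Set ℝ} {f g : ℝ → ℝ} (hfg : ConvexOn ℝ s fun x ↦ f x - g x)
    {a b c : ℝ} (ha : a ∈ s) (hb : b ∈ s) (hc : 0 ≤ c) (hcb : a + c ≤ b) :
    crossDiff g a b c ≤ crossDiff f a b c := by
  have := hfg.crossDiff_nonneg ha hb hc hcb
  unfold crossDiff at *
  linarith

theorem convexOn_Ici_of_hasDerivAt2 {a : ℝ} {f f' f'' : ℝ → ℝ}
    (hf : ∀ x, a ≤ x → HasDerivAt f (f' x) x) (hf' : ∀ x, a < x → HasDerivAt f' (f'' x) x)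
    (hf'' : ∀ x, a < x → 0 ≤ f'' x) : ConvexOn ℝ (Ici a) f := by
  refine convexOn_of_hasDerivWithinAt2_nonneg (f' := f') (f'' := f'') (convex_Ici a)
    (fun x hx ↦ (hf x hx).continuousAt.continuousWithinAt) (fun x hx ↦ ?_) (fun x hx ↦ ?_)
    (fun x hx ↦ ?_) <;> rw [interior_Ici] at hx
  · exact (hf x hx.le).hasDerivWithinAt
  · exact (hf' x hx).hasDerivWithinAt
  · exact hf'' x hx

theorem hasDerivAt_stirlingTerm {x : ℝ} (hx : 0 < x) :
    HasDerivAt stirlingTerm (log x + 1 - (2 * x)⁻¹) x := by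
  refine (((hasDerivAt_id x).sub_const (1 / 2 : ℝ)).mul (hasDerivAt_log hx.ne')).congr_deriv ?_
  simp only [id_eq]
  field_simp
  ring

theorem hasDerivAt_deriv_stirlingTerm {x : ℝ} (hx : 0 < x) :
    HasDerivAt (fun y ↦ log y + 1 - (2 * y)⁻¹) (x⁻¹ + (2 * x ^ 2)⁻¹) x := by
  refine (((hasDerivAt_log hx.ne').add_const 1).sub
    (((hasDerivAt_id x).const_mul 2).inv (by positivity))).congr_deriv ?_
  simp only [id_eq]
  field_simp
  ring

-- The cubic's second derivative `2 / n - x / n ^ 2` is the tangent line of `x⁻¹` at `x = n`,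
-- which is what lets the lower bound reach `mr + S` (notation of the header).
theorem convexOn_stirlingTerm_sub_cubic {a n : ℝ} (ha : 0 < a) (hn : 0 < n) :
    ConvexOn ℝ (Ici a) fun x ↦ stirlingTerm x - (x ^ 2 / n - x ^ 3 / (6 * n ^ 2)) := by
  refine convexOn_Ici_of_hasDerivAt2
    (f' := fun x ↦ log x + 1 - (2 * x)⁻¹ - (2 * x / n - x ^ 2 / (2 * n ^ 2)))
    (f'' := fun x ↦ x⁻¹ + (2 * x ^ 2)⁻¹ - (2 / n - x / n ^ 2))
    (fun x hx ↦ ?_) (fun x hx ↦ ?_) (fun x hx ↦ ?_)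
  · refine ((hasDerivAt_stirlingTerm (ha.trans_le hx)).sub
      (((hasDerivAt_pow 2 x).div_const n).sub
        ((hasDerivAt_pow 3 x).div_const (6 * n ^ 2)))).congr_deriv ?_
    field_simp
    ring
  · refine ((hasDerivAt_deriv_stirlingTerm (ha.trans hx)).sub
      ((((hasDerivAt_id x).const_mul 2).div_const n).sub
        ((hasDerivAt_pow 2 x).div_const (2 * n ^ 2)))).congr_deriv ?_
    field_simp
    ring
  · have hx0 : 0 < x := ha.trans hx
    have htangent : x⁻¹ - (2 / n - x / n ^ 2) = (n - x) ^ 2 / (x * n ^ 2) := by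
      field_simp
      ring
    have : 0 ≤ (n - x) ^ 2 / (x * n ^ 2) := by positivity
    have : 0 ≤ (2 * x ^ 2)⁻¹ := by positivity
    linarith

theorem convexOn_quadratic_sub_stirlingTerm {a : ℝ} (ha : 0 < a) :
    ConvexOn ℝ (Ici a) fun x ↦ (a⁻¹ + (2 * a ^ 2)⁻¹) * x ^ 2 / 2 - stirlingTerm x := by
  refine convexOn_Ici_of_hasDerivAt2
    (f' := fun x ↦ (a⁻¹ + (2 * a ^ 2)⁻¹) * x - (log x + 1 - (2 * x)⁻¹))
    (f'' := fun x ↦ (a⁻¹ + (2 * a ^ 2)⁻¹) - (x⁻¹ + (2 * x ^ 2)⁻¹))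
    (fun x hx ↦ ?_) (fun x hx ↦ ?_) (fun x hx ↦ ?_)
  · refine ((((hasDerivAt_pow 2 x).const_mul _).div_const 2).sub
      (hasDerivAt_stirlingTerm (ha.trans_le hx))).congr_deriv ?_
    ring
  · refine (((hasDerivAt_id x).const_mul _).sub
      (hasDerivAt_deriv_stirlingTerm (ha.trans hx))).congr_deriv ?_
    ring
  · have h1 : x⁻¹ ≤ a⁻¹ := inv_anti₀ ha hx.le
    have h2 : (2 * x ^ 2)⁻¹ ≤ (2 * a ^ 2)⁻¹ := by gcongr
    linarith

theorem crossDiff_stirlingTerm_ge {a b c n : ℝ} (ha : 0 < a) (hn : 0 < n) (hc : 0 ≤ c)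
    (hcb : a + c ≤ b) :
    c * (b - a - c) * (2 / n - (a + b) / (2 * n ^ 2)) ≤ crossDiff stirlingTerm a b c := by
  convert (convexOn_stirlingTerm_sub_cubic ha hn).crossDiff_le self_mem_Ici
    (mem_Ici.2 (by linarith)) hc hcb using 1
  simp only [crossDiff]
  field_simp
  ring

theorem crossDiff_stirlingTerm_le {a b c : ℝ} (ha : 0 < a) (hc : 0 ≤ c) (hcb : a + c ≤ b) :
    crossDiff stirlingTerm a b c ≤ (a⁻¹ + (2 * a ^ 2)⁻¹) * (c * (b - a - c)) := by
  convert (convexOn_quadratic_sub_stirlingTerm ha).crossDiff_le self_mem_Ici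
    (mem_Ici.2 (by linarith)) hc hcb using 1
  simp only [crossDiff]
  ring

theorem crossDiff_stirlingTerm_bounds {p m r n : ℝ} (hr : 1 ≤ r) (hrp : r ≤ p) (hm : 0 ≤ m)
    (hn : 2 * (p + m) ≤ n) :
    m * r * ((p + m / 2 - r / 2) / n) ≤ n * crossDiff stirlingTerm (n - p - m) (n + r - p) m - m * r
    ∧ n * crossDiff stirlingTerm (n - p - m) (n + r - p) m - m * r
      ≤ 8 * (m * r * ((p + m / 2 - r / 2) / n)) := by
  have hn0 : 0 < n := by linarith
  have ha0 : 0 < n - p - m := by linarith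
  have hcb : n - p - m + m ≤ n + r - p := by linarith
  have hgap : n + r - p - (n - p - m) - m = r := by ring
  constructor
  · have hlow := mul_le_mul_of_nonneg_left (crossDiff_stirlingTerm_ge ha0 hn0 hm hcb) hn0.le
    rw [hgap] at hlow
    have hS : n * (m * r * (2 / n - (n - p - m + (n + r - p)) / (2 * n ^ 2)))
        = m * r + m * r * ((p + m / 2 - r / 2) / n) := by
      field_simp
      ring
    linarith
  · have hup := mul_le_mul_of_nonneg_left (crossDiff_stirlingTerm_le ha0 hm hcb) hn0.le
    rw [hgap] at hup
    have hlin : n * (n - p - m)⁻¹ ≤ 1 + 2 * (p + m) / n := by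
      have : p + m ≤ 2 * (p + m) / n * (n - p - m) := by
        rw [div_mul_eq_mul_div, le_div_iff₀ hn0]
        nlinarith
      rw [← div_eq_mul_inv, div_le_iff₀ ha0, add_mul, one_mul]
      linarith
    have hquad : n * (2 * (n - p - m) ^ 2)⁻¹ ≤ 2 / n := by
      rw [← div_eq_mul_inv, div_le_div_iff₀ (by positivity) hn0]
      nlinarith
    have hcoef : n * ((n - p - m)⁻¹ + (2 * (n - p - m) ^ 2)⁻¹)
        ≤ 1 + 8 * ((p + m / 2 - r / 2) / n) := by
      have : 2 * (p + m) / n + 2 / n ≤ 8 * ((p + m / 2 - r / 2) / n) := by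
        rw [← add_div, ← mul_div_assoc]
        gcongr
        linarith
      linarith
    have := mul_le_mul_of_nonneg_right hcoef (by positivity : 0 ≤ m * r)
    linarith

theorem muN_eq_neg_crossDiff (p m r : ℕ → ℕ) (n : ℕ) (hn : (p n : ℝ) + m n < n) :
    muN p m r n = -(n * crossDiff stirlingTerm (n - p n - m n) (n + r n - p n) (m n)) := by
  have hC : (0 : ℝ) < n - p n - m n := by linarith
  have hA : (0 : ℝ) < n + r n - p n - m n := by linarith [(r n).cast_nonneg (α := ℝ)]
  have hB : (0 : ℝ) < n - p n := by linarith [(m n).cast_nonneg (α := ℝ)]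
  have hD : (0 : ℝ) < n + r n - p n := by linarith [(r n).cast_nonneg (α := ℝ)]
  rw [muN, log_div (by positivity) (by positivity), log_mul hA.ne' hB.ne',
    log_mul hC.ne' hD.ne', log_div hA.ne' hD.ne', log_div hB.ne' hD.ne']
  simp only [crossDiff, stirlingTerm, sub_add_cancel]
  ring

theorem div_sqrt_two_mul_bounds {q K Z C : ℝ} (hlow : q * K ≤ Z)
    (hup : Z ≤ C * (q * K)) :
    (√2)⁻¹ * (√q * K) ≤ Z / √(2 * q) ∧ Z / √(2 * q) ≤ C * (√2)⁻¹ * (√q * K) := by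
  have e : q * K / √(2 * q) = (√2)⁻¹ * (√q * K) := by
    conv_rhs => rw [← div_sqrt (x := q)]
    rw [sqrt_mul zero_le_two]
    ring
  constructor
  · exact e ▸ div_le_div_of_nonneg_right hlow (sqrt_nonneg _)
  · calc Z / √(2 * q) ≤ C * (q * K) / √(2 * q) := div_le_div_of_nonneg_right hup (sqrt_nonneg _)
      _ = C * (√2)⁻¹ * (√q * K) := by rw [mul_div_assoc, e, mul_assoc]

theorem isTheta_of_norm_le_of_le {α : Type*} {l : Filter α} {f g : α → ℝ} {c C : ℝ} (hc : 0 < c)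
    (h : ∀ᶠ x in l, c * ‖g x‖ ≤ ‖f x‖ ∧ ‖f x‖ ≤ C * ‖g x‖) : f =Θ[l] g := by
  refine ⟨.of_bound C (h.mono fun x hx ↦ hx.2), .of_bound c⁻¹ (h.mono fun x hx ↦ ?_)⟩
  rw [inv_mul_eq_div, le_div_iff₀' hc]
  exact hx.1

theorem norm_centered_muN_bounds (p m r : ℕ → ℕ) (n : ℕ) (hr : 1 ≤ r n) (hrp : r n ≤ p n)
    (hn : 2 * ((p n : ℝ) + m n) ≤ n) :
    (√2)⁻¹ * ‖√((m n : ℝ) * r n) * ((p n : ℝ) + (m n : ℝ) / 2 - (r n : ℝ) / 2) / n‖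
      ≤ ‖(muN p m r n + (m n : ℝ) * r n) / √(2 * (m n : ℝ) * r n)‖
    ∧ ‖(muN p m r n + (m n : ℝ) * r n) / √(2 * (m n : ℝ) * r n)‖
      ≤ 8 * (√2)⁻¹ * ‖√((m n : ℝ) * r n) * ((p n : ℝ) + (m n : ℝ) / 2 - (r n : ℝ) / 2) / n‖ := by
  have hr' : (1 : ℝ) ≤ r n := by exact_mod_cast hr
  have hrp' : (r n : ℝ) ≤ p n := by exact_mod_cast hrp
  obtain ⟨hlow, hup⟩ := crossDiff_stirlingTerm_bounds hr' hrp' (m n).cast_nonneg hn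
  obtain ⟨hT, hX⟩ := div_sqrt_two_mul_bounds hlow hup
  have hμ : muN p m r n + (m n : ℝ) * r n
      = -(n * crossDiff stirlingTerm (n - p n - m n) (n + r n - p n) (m n) - m n * r n) := by
    rw [muN_eq_neg_crossDiff p m r n (by linarith)]
    ring
  have hT0 : 0 ≤ √((m n : ℝ) * r n) * (((p n : ℝ) + (m n : ℝ) / 2 - (r n : ℝ) / 2) / n) := by
    have : (0 : ℝ) ≤ n := n.cast_nonneg
    have : (0 : ℝ) ≤ m n := (m n).cast_nonneg
    exact mul_nonneg (sqrt_nonneg _) (div_nonneg (by linarith) (by linarith))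
  rw [hμ, mul_assoc 2, neg_div, norm_neg, mul_div_assoc, norm_of_nonneg hT0,
    norm_of_nonneg (le_trans (by positivity) hT)]
  exact ⟨hT, hX⟩

theorem muN_centering_boundary_general
    (p m r : ℕ → ℕ)
    (h : ∀ᶠ n in atTop, 1 ≤ r n ∧ r n ≤ p n ∧ p n + m n < n)
    (hmax : Tendsto (fun (n : ℕ) => (max (p n) (max (m n) (r n)) : ℝ) / n) atTop (nhds 0)) :
    Tendsto (fun (n : ℕ) =>
        (muN p m r n + (m n : ℝ) * r n) / Real.sqrt (2 * (m n : ℝ) * r n))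
      atTop (nhds 0)
    ↔ Tendsto (fun (n : ℕ) =>
        Real.sqrt ((m n : ℝ) * r n) * ((p n : ℝ) + (m n : ℝ) / 2 - (r n : ℝ) / 2) / n)
        atTop (nhds 0) := by
  have hsmall : ∀ᶠ n : ℕ in atTop, 2 * ((p n : ℝ) + m n) ≤ n := by
    filter_upwards [hmax.eventually (gt_mem_nhds (show (0 : ℝ) < 1 / 4 by norm_num)),
      eventually_gt_atTop 0] with n hn hn0
    have hp : (p n : ℝ) ≤ max (p n : ℝ) (max (m n : ℝ) (r n)) := le_max_left _ _
    have hm : (m n : ℝ) ≤ max (p n : ℝ) (max (m n : ℝ) (r n)) :=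
      (le_max_left _ _).trans (le_max_right _ _)
    rw [div_lt_iff₀ (by exact_mod_cast hn0)] at hn
    linarith
  refine (isTheta_of_norm_le_of_le (c := (√2)⁻¹) (C := 8 * (√2)⁻¹)
    (by positivity) ?_).tendsto_zero_iff
  filter_upwards [h, hsmall] with n hr hn
  exact norm_centered_muN_bounds p m r n hr.1 hr.2.1 hn

/-- Under `n > p + m`, `p ≥ r ≥ 1`, `m·r → ∞` and `max{p,m,r}/n → 0`:
`(μₙ + mr)/√(2mr) → 0` iff `√(mr)·(p + m/2 − r/2)/n → 0`. -/
theorem muN_centering_boundary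
    (p m r : ℕ → ℕ)
    (h : ∀ᶠ n in atTop, 1 ≤ r n ∧ r n ≤ p n ∧ p n + m n < n)
    (hmr : Tendsto (fun n => (m n : ℝ) * r n) atTop atTop)
    (hmax : Tendsto (fun (n : ℕ) => (max (p n) (max (m n) (r n)) : ℝ) / n) atTop (nhds 0)) :
    Tendsto (fun (n : ℕ) =>
        (muN p m r n + (m n : ℝ) * r n) / Real.sqrt (2 * (m n : ℝ) * r n))
      atTop (nhds 0)
    ↔ Tendsto (fun (n : ℕ) =>
        Real.sqrt ((m n : ℝ) * r n) * ((p n : ℝ) + (m n : ℝ) / 2 - (r n : ℝ) / 2) / n)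
        atTop (nhds 0) :=
  muN_centering_boundary_general p m r h hmax
end

section
/- Let (Ω, F, P) be a probability space, J a positive integer, and p⁽¹⁾, …, p⁽ᴶ⁾ : Ω → [0,1] random variables each of which is super-uniform, i.e. P(p⁽ʲ⁾ ≤ u) ≤ u for every u ∈ [0,1] and every j = 1, …, J. Then for every α ∈ (0,1) and every γ_min ∈ (0,1), P( there exists γ ∈ (γ_min, 1) with (1/J)·#{ j : p⁽ʲ⁾ ≤ α·γ } ≥ γ ) ≤ α·(1 − log γ_min). -/
open MeasureTheory Filter
open scoped Classical

/-!
On the event, some `γ > γmin` has `k = #{j | p⁽ʲ⁾ ≤ αγ} ≥ γJ`, so `k ≥ k₀ := ⌊γmin J⌋ + 1`.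
Give the indicator of `{p⁽ʲ⁾ ≤ αl/J}`, for `k₀ ≤ l ≤ J`, the weight `1/l - 1/(l+1)` (`1/J` at
`l = J`). These weights telescope, so each of the `k` indices with `p⁽ʲ⁾ ≤ αγ ≤ αk/J` contributes
at least `1/k`, and the weighted sum is at least `1` on the event. By Markov's inequality and
super-uniformity, the event therefore has probability at most
`α · ∑ l * (1/l - 1/(l+1)) = α (1 + ∑_{k₀ ≤ l < J} 1/(l+1)) ≤ α (1 + log (J/k₀)) ≤ α (1 - log γmin)`.
-/

open Finset

theorem measureReal_le_sum_mul_of_one_le_sum_indicator {Ω ι : Type*} [MeasurableSpace Ω]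
    (μ : Measure Ω) [IsFiniteMeasure μ] (s : Finset ι) {A : ι → Set Ω} {w : ι → ℝ}
    (hA : ∀ i ∈ s, MeasurableSet (A i)) (hw : ∀ i ∈ s, 0 ≤ w i) {E : Set Ω}
    (hE : ∀ ω ∈ E, 1 ≤ ∑ i ∈ s, (A i).indicator (fun _ => w i) ω) :
    μ.real E ≤ ∑ i ∈ s, w i * μ.real (A i) := by
  set f : Ω → ℝ := fun ω => ∑ i ∈ s, (A i).indicator (fun _ => w i) ω
  have hf_nonneg : 0 ≤ f := fun ω =>
    sum_nonneg fun i hi => Set.indicator_nonneg (fun _ _ => hw i hi) ω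
  have hf_int : ∀ i ∈ s, Integrable ((A i).indicator fun _ => w i) μ := fun i hi =>
    (integrable_const _).indicator (hA i hi)
  calc μ.real E ≤ μ.real {ω | 1 ≤ f ω} := measureReal_mono hE
    _ ≤ ∫ ω, f ω ∂μ := by
      simpa using mul_meas_ge_le_integral_of_nonneg (ae_of_all μ hf_nonneg)
        (integrable_finsetSum s hf_int) 1
    _ = ∑ i ∈ s, w i * μ.real (A i) := by
      rw [integral_finsetSum s hf_int]
      refine sum_congr rfl fun i hi => ?_
      rw [integral_indicator_const _ (hA i hi), smul_eq_mul, mul_comm]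

theorem sum_Ico_inv_add_one_le_log_sub_log {a b : ℕ} (ha : 1 ≤ a) (hab : a ≤ b) :
    ∑ l ∈ Ico a b, ((l : ℝ) + 1)⁻¹ ≤ Real.log b - Real.log a := by
  calc ∑ l ∈ Ico a b, ((l : ℝ) + 1)⁻¹
      ≤ ∑ l ∈ Ico a b, (Real.log ((l + 1 : ℕ) : ℝ) - Real.log l) := by
        refine sum_le_sum fun l hl => ?_
        have hl : (0 : ℝ) < l := Nat.cast_pos.2 (ha.trans (mem_Ico.1 hl).1)
        have := Real.one_sub_inv_le_log_of_pos (x := (l + 1) / l) (by positivity)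
        rw [Real.log_div (by positivity) hl.ne', inv_div] at this
        have hinv : ((l : ℝ) + 1)⁻¹ = 1 - l / (l + 1) := by field_simp; ring
        push_cast
        linarith
    _ = Real.log b - Real.log a := sum_Ico_sub (fun l => Real.log l) hab

noncomputable def truncInv (J l : ℕ) : ℝ := if l ≤ J then (l : ℝ)⁻¹ else 0

noncomputable def stairWeight (J l : ℕ) : ℝ := truncInv J l - truncInv J (l + 1)

theorem stairWeight_nonneg {J l : ℕ} (hl : 1 ≤ l) : 0 ≤ stairWeight J l := by
  unfold stairWeight truncInv
  split_ifs
  · push_cast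
    exact sub_nonneg.2 (inv_anti₀ (by positivity) (by linarith))
  · simp
  · omega
  · simp

theorem sum_Icc_stairWeight {J k : ℕ} (hk : k ≤ J) :
    ∑ l ∈ Icc k J, stairWeight J l = (k : ℝ)⁻¹ := by
  unfold stairWeight
  rw [sum_congr rfl fun l _ => (neg_sub (truncInv J (l + 1)) (truncInv J l)).symm,
    sum_neg_distrib, sum_Icc_sub hk]
  simp [truncInv, hk]

theorem natCast_mul_stairWeight {J l : ℕ} (hl : 1 ≤ l) (hlJ : l < J) :
    l * stairWeight J l = ((l : ℝ) + 1)⁻¹ := by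
  have hl₁J : l + 1 ≤ J := hlJ
  have hl' : (l : ℝ) ≠ 0 := by positivity
  simp only [stairWeight, truncInv, hlJ.le, hl₁J, if_true, Nat.cast_add, Nat.cast_one]
  field_simp
  ring

theorem sum_Icc_natCast_mul_stairWeight_le {J k : ℕ} (hk : 1 ≤ k) (hkJ : k ≤ J) :
    ∑ l ∈ Icc k J, l * stairWeight J l ≤ 1 + Real.log J - Real.log k := by
  have htop : (J : ℝ) * stairWeight J J = 1 := by
    have : (J : ℝ) ≠ 0 := Nat.cast_ne_zero.2 (by omega)
    simp [stairWeight, truncInv, this]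
  rw [← Ico_insert_right hkJ, sum_insert right_notMem_Ico, htop,
    sum_congr rfl fun l hl => natCast_mul_stairWeight (hk.trans (mem_Ico.1 hl).1)
      (mem_Ico.1 hl).2]
  linarith [sum_Ico_inv_add_one_le_log_sub_log hk hkJ]

theorem sum_Icc_floor_natCast_mul_stairWeight_le {J : ℕ} (hJ : 0 < J) {γ : ℝ} (hγ0 : 0 < γ)
    (hγ1 : γ < 1) :
    ∑ l ∈ Icc (⌊γ * J⌋₊ + 1) J, l * stairWeight J l ≤ 1 - Real.log γ := by
  have hJ' : (0 : ℝ) < J := Nat.cast_pos.2 hJ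
  have hk₀J : ⌊γ * J⌋₊ + 1 ≤ J := (Nat.floor_lt (by positivity)).2 (by nlinarith)
  have hlog : Real.log (γ * J) ≤ Real.log (⌊γ * J⌋₊ + 1 : ℕ) :=
    Real.log_le_log (by positivity) (by simpa using (Nat.lt_floor_add_one (γ * J)).le)
  rw [Real.log_mul hγ0.ne' hJ'.ne'] at hlog
  linarith [sum_Icc_natCast_mul_stairWeight_le le_add_self hk₀J]

/-- For monotone `c`, `stair J k₀ c u = 1 / l` for the least `l ∈ [k₀, J]` with `u ≤ c l`,
and `0` if there is none. -/
noncomputable def stair (J k₀ : ℕ) (c : ℕ → ℝ) (u : ℝ) : ℝ :=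
  ∑ l ∈ Icc k₀ J, if u ≤ c l then stairWeight J l else 0

theorem stair_nonneg {J k₀ : ℕ} (hk₀ : 1 ≤ k₀) (c : ℕ → ℝ) (u : ℝ) : 0 ≤ stair J k₀ c u :=
  sum_nonneg fun _ hl => ite_nonneg (stairWeight_nonneg (hk₀.trans (mem_Icc.1 hl).1)) le_rfl

theorem inv_le_stair {J k₀ k : ℕ} (hk₀ : 1 ≤ k₀) (hk₀k : k₀ ≤ k) (hkJ : k ≤ J)
    {c : ℕ → ℝ} (hc : Monotone c) {u : ℝ} (hu : u ≤ c k) :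
    (k : ℝ)⁻¹ ≤ stair J k₀ c u := by
  calc (k : ℝ)⁻¹ = ∑ l ∈ Icc k J, stairWeight J l := (sum_Icc_stairWeight hkJ).symm
    _ = ∑ l ∈ Icc k J, if u ≤ c l then stairWeight J l else 0 :=
        sum_congr rfl fun l hl => (if_pos (hu.trans (hc (mem_Icc.1 hl).1))).symm
    _ ≤ stair J k₀ c u :=
        sum_le_sum_of_subset_of_nonneg (Icc_subset_Icc_left hk₀k) fun l hl _ =>
          ite_nonneg (stairWeight_nonneg (hk₀.trans (mem_Icc.1 hl).1)) le_rfl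

theorem one_le_sum_stair {J : ℕ} (hJ : 0 < J) (x : Fin J → ℝ) {α γmin γ : ℝ} (hα : 0 ≤ α)
    (hγmin : 0 ≤ γmin) (hγ : γmin < γ)
    (hcount : γ ≤ ((univ.filter fun j => x j ≤ α * γ).card : ℝ) / J) :
    1 ≤ ∑ j, stair J (⌊γmin * J⌋₊ + 1) (fun l => α * l / J) (x j) := by
  set S := univ.filter fun j => x j ≤ α * γ
  have hJ' : (0 : ℝ) < J := Nat.cast_pos.2 hJ
  have hγk : γ * J ≤ S.card := (le_div_iff₀ hJ').1 hcount
  have hk₀k : ⌊γmin * J⌋₊ + 1 ≤ S.card := (Nat.floor_lt (by positivity)).2 (by nlinarith)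
  have hkJ : S.card ≤ J := (card_filter_le _ _).trans (by simp)
  have hk : (0 : ℝ) < S.card := Nat.cast_pos.2 (by omega)
  have hc : Monotone fun l : ℕ => α * l / J := fun a b hab => by dsimp only; gcongr
  calc 1 = ∑ _j ∈ S, (S.card : ℝ)⁻¹ := by simp [hk.ne']
    _ ≤ ∑ j ∈ S, stair J (⌊γmin * J⌋₊ + 1) (fun l => α * l / J) (x j) := by
        refine sum_le_sum fun j hj => inv_le_stair le_add_self hk₀k hkJ hc ?_
        calc x j ≤ α * γ := (mem_filter.1 hj).2
          _ ≤ α * S.card / J := by rw [mul_div_assoc]; exact mul_le_mul_of_nonneg_left hcount hα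
    _ ≤ ∑ j, stair J (⌊γmin * J⌋₊ + 1) (fun l => α * l / J) (x j) :=
        sum_le_sum_of_subset_of_nonneg (subset_univ S) fun j _ _ => stair_nonneg le_add_self _ _

theorem multisplit_pvalue_control_general
    {Ω : Type*} [MeasurableSpace Ω] (P : Measure Ω) [IsProbabilityMeasure P]
    (J : ℕ) (hJ : 0 < J) (pv : Fin J → Ω → ℝ)
    (hmeas : ∀ j, Measurable (pv j))
    (hsuper : ∀ j, ∀ u ∈ Set.Icc (0 : ℝ) 1, (P {ω | pv j ω ≤ u}).toReal ≤ u)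
    (α γmin : ℝ) (hα : α ∈ Set.Ioo (0 : ℝ) 1) (hγ : γmin ∈ Set.Ioo (0 : ℝ) 1) :
    (P {ω | ∃ γ ∈ Set.Ioo γmin (1 : ℝ),
        γ ≤ ((Finset.univ.filter fun j => pv j ω ≤ α * γ).card : ℝ) / J}).toReal ≤
      α * (1 - Real.log γmin) := by
  obtain ⟨hα0, hα1⟩ := hα
  obtain ⟨hγ0, hγ1⟩ := hγ
  set k₀ := ⌊γmin * J⌋₊ + 1
  have hw : ∀ i ∈ (univ : Finset (Fin J)) ×ˢ Icc k₀ J, 0 ≤ stairWeight J i.2 := fun i hi =>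
    stairWeight_nonneg (le_add_self.trans (mem_Icc.1 (mem_product.1 hi).2).1)
  have hlevel : ∀ i ∈ (univ : Finset (Fin J)) ×ˢ Icc k₀ J, α * i.2 / J ∈ Set.Icc (0 : ℝ) 1 := fun i hi => by
    have hl : (i.2 : ℝ) ≤ J := Nat.cast_le.2 (mem_Icc.1 (mem_product.1 hi).2).2
    exact ⟨by positivity, (div_le_one (Nat.cast_pos.2 hJ)).2 (by nlinarith)⟩
  calc (P _).toReal
      ≤ ∑ i ∈ univ ×ˢ Icc k₀ J, stairWeight J i.2 * P.real {ω | pv i.1 ω ≤ α * i.2 / J} := by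
        refine measureReal_le_sum_mul_of_one_le_sum_indicator P _
          (fun i _ => measurableSet_le (hmeas i.1) measurable_const) hw
          fun ω ⟨γ, ⟨hγminγ, _⟩, hcount⟩ => ?_
        simpa only [sum_product, Set.indicator_apply, Set.mem_ofPred_eq, stair] using
          one_le_sum_stair hJ (fun j => pv j ω) hα0.le hγ0.le hγminγ hcount
    _ ≤ ∑ i ∈ univ ×ˢ Icc k₀ J, stairWeight J i.2 * (α * i.2 / J) :=
        sum_le_sum fun i hi =>
          mul_le_mul_of_nonneg_left (hsuper i.1 _ (hlevel i hi)) (hw i hi)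
    _ = α * ∑ l ∈ Icc k₀ J, l * stairWeight J l := by
        simp only [sum_product, sum_const, card_univ, Fintype.card_fin, nsmul_eq_mul, mul_sum]
        refine sum_congr rfl fun l _ => ?_
        field_simp
    _ ≤ α * (1 - Real.log γmin) := by
        gcongr
        exact sum_Icc_floor_natCast_mul_stairWeight_le hJ hγ0 hγ1

/-- Key inequality for multi-split p-value aggregation: if `p⁽¹⁾,…,p⁽ᴶ⁾` are
super-uniform `[0,1]`-valued random variables (no independence assumed), then for
`α, γ_min ∈ (0,1)`,
`P(∃ γ ∈ (γ_min,1), (1/J)·#{j : p⁽ʲ⁾ ≤ αγ} ≥ γ) ≤ α(1 − log γ_min)`. -/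
theorem multisplit_pvalue_control
    {Ω : Type*} [MeasurableSpace Ω] (P : Measure Ω) [IsProbabilityMeasure P]
    (J : ℕ) (hJ : 0 < J) (pv : Fin J → Ω → ℝ)
    (hmeas : ∀ j, Measurable (pv j))
    (hrange : ∀ j ω, pv j ω ∈ Set.Icc (0 : ℝ) 1)
    (hsuper : ∀ j, ∀ u ∈ Set.Icc (0 : ℝ) 1, (P {ω | pv j ω ≤ u}).toReal ≤ u)
    (α γmin : ℝ) (hα : α ∈ Set.Ioo (0 : ℝ) 1) (hγ : γmin ∈ Set.Ioo (0 : ℝ) 1) :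
    (P {ω | ∃ γ ∈ Set.Ioo γmin (1 : ℝ),
        γ ≤ ((Finset.univ.filter fun j => pv j ω ≤ α * γ).card : ℝ) / J}).toReal ≤
      α * (1 - Real.log γmin) :=
  multisplit_pvalue_control_general P J hJ pv hmeas hsuper α γmin hα hγ
end

section
/- For every α ∈ (0,1) and every γ_min ∈ (0,1), the Lebesgue integral over u ∈ [0,1] of the function u ↦ sup_{γ ∈ (γ_min, 1)} [1{u ≤ α·γ}/γ] equals α·(1 − log γ_min). Equivalently, if U is a random variable uniformly distributed on [0,1], then E[ sup_{γ ∈ (γ_min,1)} 1{U ≤ α·γ}/γ ] = α·(1 − log γ_min). -/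
/-!
For `0 < a < b`, `φ t = sup_{γ ∈ (a, b)} 1{t ≤ γ} / γ` equals `1 / max a t` for `t < b`
(approached as `γ ↓ max a t`) and `0` for `t ≥ b`. The integrand is `φ (u / α)` with
`(a, b) = (γmin, 1)`, so substituting `u = α t` the integral is
`α ∫₀^{1/α} φ = α (∫₀^{γmin} 1/γmin + ∫_{γmin}^1 dt/t) = α (1 - log γmin)`.
-/

open MeasureTheory Set Filter Topology

theorem iSup_Ioo_ite_le_one_div {a b : ℝ} (ha : 0 < a) (hab : a < b) (t : ℝ) :
    (⨆ γ : Ioo a b, if t ≤ (γ : ℝ) then 1 / (γ : ℝ) else 0) =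
      (Iio b).indicator (fun t ↦ 1 / max a t) t := by
  have : Nonempty (Ioo a b) := (nonempty_Ioo.2 hab).to_subtype
  rcases lt_or_ge t b with htb | hbt
  · rw [indicator_of_mem (mem_Iio.2 htb)]
    have hm : 0 < max a t := ha.trans_le (le_max_left _ _)
    have hle : ∀ γ : Ioo a b, (if t ≤ (γ : ℝ) then 1 / (γ : ℝ) else 0) ≤ 1 / max a t := by
      intro γ
      split_ifs with h
      · exact one_div_le_one_div_of_le hm (max_le γ.2.1.le h)
      · positivity
    refine le_antisymm (ciSup_le hle)
      (le_of_tendsto (f := fun γ ↦ 1 / γ) (x := 𝓝[>] max a t) ?_ ?_)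
    · exact (continuousAt_const.div continuousAt_id hm.ne').tendsto.mono_left nhdsWithin_le_nhds
    · filter_upwards [Ioo_mem_nhdsGT (max_lt hab htb)] with γ hγ
      have hγ_mem : γ ∈ Ioo a b := ⟨(le_max_left _ _).trans_lt hγ.1, hγ.2⟩
      have := le_ciSup ⟨1 / max a t, forall_mem_range.2 hle⟩ ⟨γ, hγ_mem⟩
      rwa [if_pos ((le_max_right _ _).trans hγ.1.le)] at this
  · have hzero : ∀ γ : Ioo a b, (if t ≤ (γ : ℝ) then 1 / (γ : ℝ) else 0) = 0 :=
      fun γ ↦ if_neg (not_le.2 (γ.2.2.trans_le hbt))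
    rw [indicator_of_notMem (notMem_Iio.2 hbt), iSup_congr hzero, ciSup_const]

theorem integral_indicator_Iio_one_div_max {a b c : ℝ} (ha : 0 < a) (hab : a ≤ b)
    (hbc : b ≤ c) :
    ∫ t in (0 : ℝ)..c, (Iio b).indicator (fun t ↦ 1 / max a t) t = 1 + Real.log (b / a) := by
  have hcont : Continuous fun t : ℝ ↦ 1 / max a t :=
    continuous_const.div (continuous_const.max continuous_id)
      fun t ↦ (ha.trans_le (le_max_left _ _)).ne'
  calc ∫ t in (0 : ℝ)..c, (Iio b).indicator (fun t ↦ 1 / max a t) t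
      = ∫ t in (0 : ℝ)..c, {t | t ≤ b}.indicator (fun t ↦ 1 / max a t) t :=
        intervalIntegral.integral_congr_ae
          ((indicator_ae_eq_of_ae_eq_set Iio_ae_eq_Iic).mono fun _ h _ ↦ h)
    _ = ∫ t in (0 : ℝ)..b, 1 / max a t :=
        intervalIntegral.integral_indicator ⟨ha.le.trans hab, hbc⟩
    _ = (∫ t in (0 : ℝ)..a, 1 / max a t) + ∫ t in a..b, 1 / max a t :=
        (intervalIntegral.integral_add_adjacent_intervals
          (hcont.intervalIntegrable _ _) (hcont.intervalIntegrable _ _)).symm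
    _ = (∫ _ in (0 : ℝ)..a, 1 / a) + ∫ t in a..b, 1 / t := by
        congr 1 <;> refine intervalIntegral.integral_congr fun t ht ↦ ?_
        · rw [uIcc_of_le ha.le] at ht
          simp only [max_eq_left ht.2]
        · rw [uIcc_of_le hab] at ht
          simp only [max_eq_right ht.1]
    _ = 1 + Real.log (b / a) := by
        rw [intervalIntegral.integral_const, integral_one_div_of_pos ha (ha.trans_le hab),
          smul_eq_mul, sub_zero, mul_one_div_cancel ha.ne']

/-- The expectation of `sup_{γ ∈ (γ_min,1)} 1{U ≤ αγ}/γ` for `U` uniform on `[0,1]`: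
the Lebesgue integral over `[0,1]` of `u ↦ sup_{γ ∈ (γ_min,1)} 1{u ≤ αγ}/γ` is
exactly `α(1 − log γ_min)`. -/
theorem integral_sup_indicator_div
    (α γmin : ℝ) (hα : α ∈ Set.Ioo (0 : ℝ) 1) (hγ : γmin ∈ Set.Ioo (0 : ℝ) 1) :
    ∫ u in Set.Icc (0 : ℝ) 1,
        (⨆ γ : Set.Ioo γmin (1 : ℝ), if u ≤ α * (γ : ℝ) then 1 / (γ : ℝ) else 0) =
      α * (1 - Real.log γmin) := by
  obtain ⟨hα0, hα1⟩ := hα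
  obtain ⟨hγ0, hγ1⟩ := hγ
  have hdiv (u γ : ℝ) : u ≤ α * γ ↔ u / α ≤ γ := (div_le_iff₀' hα0).symm
  simp_rw [hdiv, iSup_Ioo_ite_le_one_div hγ0 hγ1]
  rw [integral_Icc_eq_integral_Ioc, ← intervalIntegral.integral_of_le zero_le_one,
    intervalIntegral.integral_comp_div (fun t ↦ (Iio 1).indicator (fun t ↦ 1 / max γmin t) t)
      hα0.ne', zero_div,
    integral_indicator_Iio_one_div_max hγ0 hγ1.le (one_le_one_div hα0 hα1.le), one_div,
    Real.log_inv, smul_eq_mul, sub_eq_add_neg]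
end

section
/- Fix constants t ≥ 0, c₂ > 0, c₆ > 0 and u ≥ 0. For each n, let Σ_y be an mₙ × mₙ real symmetric positive definite matrix with λ_min(Σ_y) ≥ c₂·n^{−t}, let Z̃ be an n × mₙ random matrix with independent standard normal entries, set Y = Z̃·Σ_y^{1/2}, and let Pₙ = Iₙ − (1/n)·𝟙𝟙ᵀ. Suppose there exist constants c₁ > 1, c₀ > 0 and N such that for all n > N, Prob( λ_max(n⁻¹Z̃ᵀPₙZ̃) > c₁ or λ_min(n⁻¹Z̃ᵀPₙZ̃) < 1/c₁ ) ≤ exp(−c₀·n/log n). Then there exist constants c₁' > 0, c₂' > 0, c₀' > 0 and N' such that for all n > N': (i) Prob( λ_min(YᵀPₙY) < c₁'·n^{1−t} ) ≤ exp(−c₀'·n/log n); and (ii) for any fixed unit vector a ∈ ℝ^{mₙ} with aᵀΣ_y a ≤ c₆·n^{2u}, Prob( aᵀYᵀPₙY a > c₂'·n^{2u+1} ) ≤ exp(−c₀'·n/log n). -/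
/-!
On the event where `n⁻¹ Z̃ᵀPₙZ̃` has its spectrum in `[1/c₁, c₁]`, the Loewner bounds
`(n/c₁) I ≤ Z̃ᵀPₙZ̃ ≤ n c₁ I` survive conjugation by the symmetric square root `S` of `Σ_y`,
since `YᵀPₙY = S (Z̃ᵀPₙZ̃) S`; this gives `(n/c₁) Σ_y ≤ YᵀPₙY ≤ n c₁ Σ_y`. Together with
`Σ_y ≥ c₂ n^{-t} I` the lower bound yields (i), and the upper bound evaluated at `a` yields (ii).
So both failure events lie inside the concentration event of the hypothesis, and
`c₁' = c₂ / c₁`, `c₂' = c₁ c₆`, `c₀' = c₀` work.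
-/

open MeasureTheory ProbabilityTheory Filter Matrix

/-- The largest eigenvalue of a square real matrix, as the supremum of its set of
(real) eigenvalues. -/
noncomputable def lamMax {k : ℕ} (A : Matrix (Fin k) (Fin k) ℝ) : ℝ :=
  sSup {μ : ℝ | ∃ v : Fin k → ℝ, v ≠ 0 ∧ A.mulVec v = μ • v}

/-- The smallest eigenvalue of a square real matrix. -/
noncomputable def lamMin {k : ℕ} (A : Matrix (Fin k) (Fin k) ℝ) : ℝ :=
  sInf {μ : ℝ | ∃ v : Fin k → ℝ, v ≠ 0 ∧ A.mulVec v = μ • v}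

/-- The centering projection `Pₙ = Iₙ − (1/n)𝟙𝟙ᵀ`. -/
noncomputable def centerMat (n : ℕ) : Matrix (Fin n) (Fin n) ℝ :=
  1 - ((n : ℝ))⁻¹ • Matrix.of (fun _ _ => (1 : ℝ))

open scoped MatrixOrder ComplexOrder Pointwise

theorem Matrix.setOf_exists_mulVec_eq_smul_eq_spectrum {ι K : Type*} [Fintype ι] [DecidableEq ι]
    [Field K] (A : Matrix ι ι K) :
    {μ : K | ∃ v : ι → K, v ≠ 0 ∧ A *ᵥ v = μ • v} = spectrum K A := by
  ext μ
  rw [← spectrum_toLin', ← Module.End.hasEigenvalue_iff_mem_spectrum]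
  constructor
  · rintro ⟨v, hv, hAv⟩
    exact Module.End.hasEigenvalue_of_hasEigenvector
      (Module.End.hasEigenvector_iff.mpr ⟨Module.End.mem_eigenspace_iff.mpr hAv, hv⟩)
  · intro h
    obtain ⟨v, hv⟩ := h.exists_hasEigenvector
    exact ⟨v, hv.2, hv.apply_eq_smul⟩

theorem Matrix.dotProduct_mulVec_le_of_le {ι 𝕜 : Type*} [Fintype ι] [RCLike 𝕜]
    {A B : Matrix ι ι 𝕜} (h : A ≤ B) (x : ι → 𝕜) : star x ⬝ᵥ A *ᵥ x ≤ star x ⬝ᵥ B *ᵥ x := by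
  simpa [sub_mulVec, dotProduct_sub] using (Matrix.le_iff.mp h).dotProduct_mulVec_nonneg x

theorem spectrum_smul_of_ne_zero {K A : Type*} [Field K] [Ring A] [Algebra K A] {r : K}
    (hr : r ≠ 0) (a : A) : spectrum K (r • a) = r • spectrum K a := by
  simpa using spectrum.unit_smul_eq_smul a (Units.mk0 r hr)

section ExtremeEigenvalues

variable {k : ℕ} {A : Matrix (Fin k) (Fin k) ℝ} {c : ℝ}

lemma lamMin_eq_sInf_spectrum (A : Matrix (Fin k) (Fin k) ℝ) :
    lamMin A = sInf (spectrum ℝ A) := by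
  rw [lamMin, setOf_exists_mulVec_eq_smul_eq_spectrum]

lemma lamMax_eq_sSup_spectrum (A : Matrix (Fin k) (Fin k) ℝ) :
    lamMax A = sSup (spectrum ℝ A) := by
  rw [lamMax, setOf_exists_mulVec_eq_smul_eq_spectrum]

lemma nonempty_of_lamMin_ne_zero (h : lamMin A ≠ 0) : Nonempty (Fin k) := by
  by_contra hk
  rw [not_nonempty_iff] at hk
  exact h (by rw [lamMin_eq_sInf_spectrum, spectrum.of_subsingleton, Real.sInf_empty])

lemma lamMin_smul {r : ℝ} (hr : 0 < r) (A : Matrix (Fin k) (Fin k) ℝ) :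
    lamMin (r • A) = r * lamMin A := by
  rw [lamMin_eq_sInf_spectrum, lamMin_eq_sInf_spectrum, spectrum_smul_of_ne_zero hr.ne',
    Real.sInf_smul_of_nonneg hr.le, smul_eq_mul]

lemma lamMax_smul {r : ℝ} (hr : 0 < r) (A : Matrix (Fin k) (Fin k) ℝ) :
    lamMax (r • A) = r * lamMax A := by
  rw [lamMax_eq_sSup_spectrum, lamMax_eq_sSup_spectrum, spectrum_smul_of_ne_zero hr.ne',
    Real.sSup_smul_of_nonneg hr.le, smul_eq_mul]

lemma algebraMap_le_of_le_lamMin (hA : A.IsHermitian) (h : c ≤ lamMin A) :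
    algebraMap ℝ _ c ≤ A :=
  (algebraMap_le_iff_le_spectrum hA.isSelfAdjoint).mpr fun _ hμ =>
    h.trans (lamMin_eq_sInf_spectrum A ▸ csInf_le finite_real_spectrum.bddBelow hμ)

lemma le_algebraMap_of_lamMax_le (hA : A.IsHermitian) (h : lamMax A ≤ c) :
    A ≤ algebraMap ℝ _ c :=
  (le_algebraMap_iff_spectrum_le hA.isSelfAdjoint).mpr fun _ hμ =>
    (lamMax_eq_sSup_spectrum A ▸ le_csSup finite_real_spectrum.bddAbove hμ).trans h

lemma le_lamMin_of_algebraMap_le [Nonempty (Fin k)] (hA : A.IsHermitian)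
    (h : algebraMap ℝ _ c ≤ A) : c ≤ lamMin A := by
  rw [lamMin_eq_sInf_spectrum]
  refine le_csInf ?_ ((algebraMap_le_iff_le_spectrum hA.isSelfAdjoint).mp h)
  rw [hA.spectrum_real_eq_range_eigenvalues]
  exact Set.range_nonempty _

end ExtremeEigenvalues

section Conjugation

variable {k : ℕ} {G S : Matrix (Fin k) (Fin k) ℝ}

lemma le_lamMin_conj [Nonempty (Fin k)] (hG : G.IsHermitian) (hS : S.IsHermitian) {α σ : ℝ}
    (hα : 0 ≤ α) (hGα : α ≤ lamMin G) (hσ : σ ≤ lamMin (S * S)) :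
    α * σ ≤ lamMin (S * G * S) := by
  have hSS : (S * S).IsHermitian := by
    simpa only [hS.eq] using isHermitian_mul_conjTranspose_self S
  have hSGS : (S * G * S).IsHermitian := by
    simpa only [hS.eq] using isHermitian_conjTranspose_mul_mul S hG
  refine le_lamMin_of_algebraMap_le hSGS ?_
  calc algebraMap ℝ _ (α * σ) = α • algebraMap ℝ _ σ := by
        simp [Algebra.algebraMap_eq_smul_one, smul_smul]
    _ ≤ α • (S * S) := smul_le_smul_of_nonneg_left (algebraMap_le_of_le_lamMin hSS hσ) hα
    _ = star S * algebraMap ℝ _ α * S := by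
        rw [Algebra.algebraMap_eq_smul_one, star_eq_conjTranspose, hS.eq]; simp
    _ ≤ star S * G * S := star_left_conjugate_le_conjugate (algebraMap_le_of_le_lamMin hG hGα) S
    _ = S * G * S := by rw [star_eq_conjTranspose, hS.eq]

lemma dotProduct_conj_mulVec_le (hG : G.IsHermitian) (hS : S.IsHermitian) {β : ℝ}
    (hGβ : lamMax G ≤ β) (a : Fin k → ℝ) :
    a ⬝ᵥ (S * G * S) *ᵥ a ≤ β * (a ⬝ᵥ (S * S) *ᵥ a) := by
  have hconj := star_left_conjugate_le_conjugate (le_algebraMap_of_lamMax_le hG hGβ) S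
  rw [star_eq_conjTranspose, hS.eq, Algebra.algebraMap_eq_smul_one] at hconj
  simpa [smul_mulVec, dotProduct_smul] using dotProduct_mulVec_le_of_le hconj a

end Conjugation

noncomputable def centeredGram {n k : ℕ} (X : Matrix (Fin n) (Fin k) ℝ) :
    Matrix (Fin k) (Fin k) ℝ :=
  Xᵀ * centerMat n * X

section CenteredGram

variable {n k : ℕ}

lemma centerMat_isHermitian (n : ℕ) : (centerMat n).IsHermitian := by
  ext i j
  simp [centerMat, one_apply, eq_comm]

lemma centeredGram_isHermitian (X : Matrix (Fin n) (Fin k) ℝ) : (centeredGram X).IsHermitian := by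
  rw [centeredGram]
  simpa only [conjTranspose_eq_transpose_of_trivial] using
    isHermitian_conjTranspose_mul_mul X (centerMat_isHermitian n)

lemma centeredGram_mul_of_isHermitian (Z : Matrix (Fin n) (Fin k) ℝ)
    {S : Matrix (Fin k) (Fin k) ℝ} (hS : S.IsHermitian) :
    centeredGram (Z * S) = S * centeredGram Z * S := by
  rw [centeredGram, centeredGram, transpose_mul, ← conjTranspose_eq_transpose_of_trivial, hS.eq]
  simp only [Matrix.mul_assoc]

lemma le_lamMin_centeredGram_mul (hn : 0 < n) [Nonempty (Fin k)] (Z : Matrix (Fin n) (Fin k) ℝ)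
    {S : Matrix (Fin k) (Fin k) ℝ} (hS : S.IsHermitian) {α σ : ℝ} (hα : 0 ≤ α)
    (hZ : α ≤ lamMin ((n : ℝ)⁻¹ • centeredGram Z)) (hσ : σ ≤ lamMin (S * S)) :
    n * α * σ ≤ lamMin (centeredGram (Z * S)) := by
  have hn' : (0 : ℝ) < n := Nat.cast_pos.mpr hn
  have hG : n * α ≤ lamMin (centeredGram Z) := by
    rw [← smul_inv_smul₀ hn'.ne' (centeredGram Z), lamMin_smul hn']
    exact mul_le_mul_of_nonneg_left hZ hn'.le
  rw [centeredGram_mul_of_isHermitian Z hS]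
  exact le_lamMin_conj (centeredGram_isHermitian Z) hS (by positivity) hG hσ

lemma dotProduct_centeredGram_mul_mulVec_le (hn : 0 < n) (Z : Matrix (Fin n) (Fin k) ℝ)
    {S : Matrix (Fin k) (Fin k) ℝ} (hS : S.IsHermitian) {β : ℝ}
    (hZ : lamMax ((n : ℝ)⁻¹ • centeredGram Z) ≤ β) (a : Fin k → ℝ) :
    a ⬝ᵥ centeredGram (Z * S) *ᵥ a ≤ n * β * (a ⬝ᵥ (S * S) *ᵥ a) := by
  have hn' : (0 : ℝ) < n := Nat.cast_pos.mpr hn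
  have hG : lamMax (centeredGram Z) ≤ n * β := by
    rw [← smul_inv_smul₀ hn'.ne' (centeredGram Z), lamMax_smul hn']
    exact mul_le_mul_of_nonneg_left hZ hn'.le
  rw [centeredGram_mul_of_isHermitian Z hS]
  exact dotProduct_conj_mulVec_le (centeredGram_isHermitian Z) hS hG a

end CenteredGram

theorem Y_gram_eigenvalue_bounds_general
    (t c₂ c₆ u : ℝ) (hc₂ : 0 < c₂) (hc₆ : 0 < c₆)
    (m : ℕ → ℕ)
    (Sy Ssq : (n : ℕ) → Matrix (Fin (m n)) (Fin (m n)) ℝ)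
    (hSsq : ∀ n, (Ssq n).PosDef ∧ Ssq n * Ssq n = Sy n)
    (hSymin : ∀ n : ℕ, 1 ≤ n → c₂ * (n : ℝ) ^ (-t) ≤ lamMin (Sy n))
    {Ω : Type*} [MeasurableSpace Ω] (P : Measure Ω)
    (Zt : (n : ℕ) → Ω → Matrix (Fin n) (Fin (m n)) ℝ)
    (c₁ c₀ : ℝ) (N : ℕ) (hc₁ : 1 < c₁) (hc₀ : 0 < c₀)
    (hconc : ∀ n : ℕ, N < n →
      P {ω | c₁ < lamMax (((n : ℝ))⁻¹ • ((Zt n ω)ᵀ * centerMat n * Zt n ω)) ∨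
             lamMin (((n : ℝ))⁻¹ • ((Zt n ω)ᵀ * centerMat n * Zt n ω)) < 1 / c₁} ≤
        ENNReal.ofReal (Real.exp (-(c₀ * n) / Real.log n))) :
    ∃ c₁' c₂' c₀' : ℝ, 0 < c₁' ∧ 0 < c₂' ∧ 0 < c₀' ∧ ∃ N' : ℕ, ∀ n : ℕ, N' < n →
      (P {ω | lamMin ((Zt n ω * Ssq n)ᵀ * centerMat n * (Zt n ω * Ssq n)) <
            c₁' * (n : ℝ) ^ ((1 : ℝ) - t)} ≤
        ENNReal.ofReal (Real.exp (-(c₀' * n) / Real.log n)))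
      ∧ ∀ a : Fin (m n) → ℝ, a ⬝ᵥ a = 1 → a ⬝ᵥ (Sy n).mulVec a ≤ c₆ * (n : ℝ) ^ (2 * u) →
          P {ω | c₂' * (n : ℝ) ^ (2 * u + 1) <
              a ⬝ᵥ ((Zt n ω * Ssq n)ᵀ * centerMat n * (Zt n ω * Ssq n)).mulVec a} ≤
            ENNReal.ofReal (Real.exp (-(c₀' * n) / Real.log n)) := by
  have hc₁pos : 0 < c₁ := one_pos.trans hc₁
  refine ⟨c₂ / c₁, c₁ * c₆, c₀, by positivity, by positivity, hc₀, max N 1, fun n hnN => ?_⟩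
  have hNn : N < n := (le_max_left N 1).trans_lt hnN
  have hn : 0 < n := Nat.zero_lt_of_lt ((le_max_right N 1).trans_lt hnN)
  have hn' : (0 : ℝ) < n := Nat.cast_pos.mpr hn
  have hσ := hSymin n hn
  have : Nonempty (Fin (m n)) :=
    nonempty_of_lamMin_ne_zero (lt_of_lt_of_le (by positivity) hσ).ne'
  obtain ⟨hS, hsq⟩ := hSsq n
  refine ⟨(measure_mono fun ω hω => ?_).trans (hconc n hNn),
    fun a _ ha => (measure_mono fun ω hω => ?_).trans (hconc n hNn)⟩ <;>
    rw [Set.mem_ofPred_eq] at hω ⊢ <;> by_contra! hgood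
  · have hlow := le_lamMin_centeredGram_mul hn (Zt n ω) hS.1 (by positivity) hgood.2 (hsq ▸ hσ)
    refine hω.not_ge (le_of_eq_of_le ?_ hlow)
    rw [Real.rpow_sub hn', Real.rpow_one, Real.rpow_neg hn'.le]
    ring
  · have hup := dotProduct_centeredGram_mul_mulVec_le hn (Zt n ω) hS.1 hgood.1 a
    refine hω.not_ge (hup.trans ?_)
    calc n * c₁ * (a ⬝ᵥ (Ssq n * Ssq n) *ᵥ a) ≤ n * c₁ * (c₆ * (n : ℝ) ^ (2 * u)) := by
          rw [hsq]; exact mul_le_mul_of_nonneg_left ha (by positivity)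
      _ = c₁ * c₆ * (n : ℝ) ^ (2 * u + 1) := by
          rw [Real.rpow_add hn', Real.rpow_one]; ring

/-- Lemma 9 (eigenvalue bounds for `YᵀPₙY` with `Y = Z̃ Σ_y^{1/2}`): if
`λ_min(Σ_y) ≥ c₂ n^{−t}` and the centered standardized Gram matrices concentrate,
then (i) `λ_min(YᵀPₙY) ≥ c₁' n^{1−t}` with overwhelming probability, and (ii) for any
unit vector `a` with `aᵀΣ_y a ≤ c₆ n^{2u}`, `aᵀYᵀPₙY a ≤ c₂' n^{2u+1}` with
overwhelming probability. -/
theorem Y_gram_eigenvalue_bounds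
    (t c₂ c₆ u : ℝ) (ht : 0 ≤ t) (hc₂ : 0 < c₂) (hc₆ : 0 < c₆) (hu : 0 ≤ u)
    (m : ℕ → ℕ)
    (Sy Ssq : (n : ℕ) → Matrix (Fin (m n)) (Fin (m n)) ℝ)
    (hSy : ∀ n, (Sy n).PosDef)
    (hSsq : ∀ n, (Ssq n).PosDef ∧ Ssq n * Ssq n = Sy n)
    (hSymin : ∀ n : ℕ, 1 ≤ n → c₂ * (n : ℝ) ^ (-t) ≤ lamMin (Sy n))
    {Ω : Type*} [MeasurableSpace Ω] (P : Measure Ω) [IsProbabilityMeasure P]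
    (Zt : (n : ℕ) → Ω → Matrix (Fin n) (Fin (m n)) ℝ)
    (hZmeas : ∀ n i j, Measurable (fun ω => Zt n ω i j))
    (hZindep : ∀ n, iIndepFun
      (fun ij : Fin n × Fin (m n) => fun ω => Zt n ω ij.1 ij.2) P)
    (hZlaw : ∀ n i j, Measure.map (fun ω => Zt n ω i j) P = gaussianReal 0 1)
    (c₁ c₀ : ℝ) (N : ℕ) (hc₁ : 1 < c₁) (hc₀ : 0 < c₀)
    (hconc : ∀ n : ℕ, N < n →
      P {ω | c₁ < lamMax (((n : ℝ))⁻¹ • ((Zt n ω)ᵀ * centerMat n * Zt n ω)) ∨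
             lamMin (((n : ℝ))⁻¹ • ((Zt n ω)ᵀ * centerMat n * Zt n ω)) < 1 / c₁} ≤
        ENNReal.ofReal (Real.exp (-(c₀ * n) / Real.log n))) :
    ∃ c₁' c₂' c₀' : ℝ, 0 < c₁' ∧ 0 < c₂' ∧ 0 < c₀' ∧ ∃ N' : ℕ, ∀ n : ℕ, N' < n →
      (P {ω | lamMin ((Zt n ω * Ssq n)ᵀ * centerMat n * (Zt n ω * Ssq n)) <
            c₁' * (n : ℝ) ^ ((1 : ℝ) - t)} ≤
        ENNReal.ofReal (Real.exp (-(c₀' * n) / Real.log n)))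
      ∧ ∀ a : Fin (m n) → ℝ, a ⬝ᵥ a = 1 → a ⬝ᵥ (Sy n).mulVec a ≤ c₆ * (n : ℝ) ^ (2 * u) →
          P {ω | c₂' * (n : ℝ) ^ (2 * u + 1) <
              a ⬝ᵥ ((Zt n ω * Ssq n)ᵀ * centerMat n * (Zt n ω * Ssq n)).mulVec a} ≤
            ENNReal.ofReal (Real.exp (-(c₀' * n) / Real.log n)) :=
  Y_gram_eigenvalue_bounds_general t c₂ c₆ u hc₂ hc₆ m Sy Ssq hSsq hSymin P Zt c₁ c₀ N hc₁ hc₀ hconc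
end
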